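/- arXiv:2412.10519 — 6 statements merged into one kernel-verified Lean document; each statement's English description precedes it below -/
import Mathlib

section
/- Let X_t be a vector field on a matrix Lie group G satisfying the group-affine property X_t(hg) = h X_t(g) + X_t(h) g − h X_t(e) g for all g, h ∈ G, and decompose X_t(g) = ξ(t)g + X̃_t(g) + gζ(t) with X̃_t(e) = 0 and ξ(t) + ζ(t) = X_t(e). Then X̃_t satisfies the additive cocycle property X̃_t(hg) = h X̃_t(g) + X̃_t(h) g for all g, h ∈ G. -/
open Matrix

/-- If `X_t` is group-affine on a matrix Lie group `G` and is decomposed as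
`X_t(g) = ξ(t) g + X̃_t(g) + g ζ(t)` with `X̃_t(e) = 0` and `ξ(t) + ζ(t) = X_t(e)`,
then `X̃_t` satisfies the additive cocycle property. -/
theorem cocycle_of_group_affine (n : ℕ) (G : Set (Matrix (Fin n) (Fin n) ℝ))
    (hone : (1 : Matrix (Fin n) (Fin n) ℝ) ∈ G)
    (hmul : ∀ a ∈ G, ∀ b ∈ G, a * b ∈ G)
    (X Xt : ℝ → Matrix (Fin n) (Fin n) ℝ → Matrix (Fin n) (Fin n) ℝ)
    (ξ ζ : ℝ → Matrix (Fin n) (Fin n) ℝ)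
    (hGA : ∀ t, ∀ g ∈ G, ∀ h ∈ G,
      X t (h * g) = h * X t g + X t h * g - h * X t 1 * g)
    (hdecomp : ∀ t, ∀ g ∈ G, X t g = ξ t * g + Xt t g + g * ζ t)
    (hXte : ∀ t, Xt t 1 = 0)
    (hξζ : ∀ t, ξ t + ζ t = X t 1) :
    ∀ t, ∀ g ∈ G, ∀ h ∈ G, Xt t (h * g) = h * Xt t g + Xt t h * g := by
  intro t g hg h hh
  have hXg := hdecomp t g hg
  have hXh := hdecomp t h hh
  have hXhg := hdecomp t (h * g) (hmul h hh g hg)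
  have hGA' := hGA t g hg h hh
  have hX1 := hξζ t
  have e1 : Xt t (h * g) = X t (h * g) - ξ t * (h * g) - (h * g) * ζ t := by
    rw [hXhg]; noncomm_ring
  rw [e1, hGA', hXg, hXh, ← hX1]
  noncomm_ring
end

section
/- Suppose g and ḡ are two differentiable curves on a matrix Lie group G both satisfying ẋ = ξ(t)x + X̃_t(x) + xζ(t), where X̃_t satisfies the cocycle property X̃_t(hg) = h X̃_t(g) + X̃_t(h) g. Then the left-invariant error f = g⁻¹ḡ satisfies the autonomous equation ḟ = X̃_t(f) + fζ(t) − ζ(t)f, which does not involve ξ, g, or ḡ. -/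
/-!
Differentiating `f = g⁻¹ ḡ` gives `ḟ = g⁻¹ (ḡ' - ġ f)`. Since `ḡ = g f`, the `ξ`-terms of `ḡ'` and
`ġ f` cancel, and the cocycle identity `X̃(g f) = g X̃(f) + X̃(g) f` cancels the `X̃(g)`-terms,
leaving `g (X̃(f) + f ζ - ζ f)`.
-/

open Matrix

attribute [local instance] Matrix.linftyOpNormedRing Matrix.linftyOpNormedAlgebra

section RingInverse

variable {𝕜 : Type*} [NontriviallyNormedField 𝕜]
  {R : Type*} [NormedRing R] [HasSummableGeomSeries R] [NormedAlgebra 𝕜 R]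
  {g h : 𝕜 → R} {g' h' : R} {t : 𝕜}

theorem HasDerivAt.ringInverse (hg : HasDerivAt g g' t) (hu : IsUnit (g t)) :
    HasDerivAt (fun s => Ring.inverse (g s))
      (-(Ring.inverse (g t) * g' * Ring.inverse (g t))) t := by
  obtain ⟨u, hu⟩ := hu
  refine ((hu ▸ hasFDerivAt_ringInverse (𝕜 := 𝕜) u).comp_hasDerivAt t hg).congr_deriv ?_
  simp [← hu]

theorem HasDerivAt.ringInverse_mul (hg : HasDerivAt g g' t) (hh : HasDerivAt h h' t)
    (hu : IsUnit (g t)) :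
    HasDerivAt (fun s => Ring.inverse (g s) * h s)
      (Ring.inverse (g t) * (h' - g' * (Ring.inverse (g t) * h t))) t := by
  refine ((hg.ringInverse hu).mul hh).congr_deriv ?_
  noncomm_ring

end RingInverse

theorem cocycle_field_sub_mul {R : Type*} [Ring R] (X : R → R) {ξ ζ u v f : R}
    (hv : u * f = v) (hX : X v = u * X f + X u * f) :
    ξ * v + X v + v * ζ - (ξ * u + X u + u * ζ) * f = u * (X f + f * ζ - ζ * f) := by
  rw [hX, ← hv]
  noncomm_ring

theorem left_error_autonomous_general (n : ℕ) (G : Set (Matrix (Fin n) (Fin n) ℝ))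
    (hmul : ∀ a ∈ G, ∀ b ∈ G, a * b ∈ G)
    (hinv : ∀ a ∈ G, a⁻¹ ∈ G)
    (Xt : ℝ → Matrix (Fin n) (Fin n) ℝ → Matrix (Fin n) (Fin n) ℝ)
    (ξ ζ : ℝ → Matrix (Fin n) (Fin n) ℝ)
    (hcoc : ∀ t, ∀ g ∈ G, ∀ h ∈ G, Xt t (h * g) = h * Xt t g + Xt t h * g)
    (g gbar : ℝ → Matrix (Fin n) (Fin n) ℝ)
    (hgG : ∀ t, g t ∈ G) (hgbarG : ∀ t, gbar t ∈ G)
    (hunit : ∀ t, IsUnit (g t))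
    (hdg : ∀ t, HasDerivAt g (ξ t * g t + Xt t (g t) + g t * ζ t) t)
    (hdgbar : ∀ t, HasDerivAt gbar (ξ t * gbar t + Xt t (gbar t) + gbar t * ζ t) t) :
    ∀ t, HasDerivAt (fun s => (g s)⁻¹ * gbar s)
      (Xt t ((g t)⁻¹ * gbar t) + ((g t)⁻¹ * gbar t) * ζ t
        - ζ t * ((g t)⁻¹ * gbar t)) t := by
  intro t
  simp only [nonsing_inv_eq_ringInverse] at hinv ⊢
  have hf : Ring.inverse (g t) * gbar t ∈ G := hmul _ (hinv _ (hgG t)) _ (hgbarG t)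
  have hgf : g t * (Ring.inverse (g t) * gbar t) = gbar t :=
    Ring.mul_inverse_cancel_left _ _ (hunit t)
  have hX := hgf ▸ hcoc t _ hf _ (hgG t)
  refine ((hdg t).ringInverse_mul (hdgbar t) (hunit t)).congr_deriv ?_
  rw [cocycle_field_sub_mul (Xt t) hgf hX, ← mul_assoc, Ring.inverse_mul_cancel _ (hunit t),
    one_mul]

/-- If `g` and `ḡ` both satisfy `ẋ = ξ(t) x + X̃_t(x) + x ζ(t)` with `X̃` satisfying the
cocycle property, then the left-invariant error `f = g⁻¹ ḡ` satisfies the autonomous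
equation `ḟ = X̃_t(f) + f ζ(t) − ζ(t) f`. -/
theorem left_error_autonomous (n : ℕ) (G : Set (Matrix (Fin n) (Fin n) ℝ))
    (hone : (1 : Matrix (Fin n) (Fin n) ℝ) ∈ G)
    (hmul : ∀ a ∈ G, ∀ b ∈ G, a * b ∈ G)
    (hinv : ∀ a ∈ G, a⁻¹ ∈ G)
    (Xt : ℝ → Matrix (Fin n) (Fin n) ℝ → Matrix (Fin n) (Fin n) ℝ)
    (ξ ζ : ℝ → Matrix (Fin n) (Fin n) ℝ)
    (hcoc : ∀ t, ∀ g ∈ G, ∀ h ∈ G, Xt t (h * g) = h * Xt t g + Xt t h * g)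
    (g gbar : ℝ → Matrix (Fin n) (Fin n) ℝ)
    (hgG : ∀ t, g t ∈ G) (hgbarG : ∀ t, gbar t ∈ G)
    (hunit : ∀ t, IsUnit (g t))
    (hdg : ∀ t, HasDerivAt g (ξ t * g t + Xt t (g t) + g t * ζ t) t)
    (hdgbar : ∀ t, HasDerivAt gbar (ξ t * gbar t + Xt t (gbar t) + gbar t * ζ t) t) :
    ∀ t, HasDerivAt (fun s => (g s)⁻¹ * gbar s)
      (Xt t ((g t)⁻¹ * gbar t) + ((g t)⁻¹ * gbar t) * ζ t
        - ζ t * ((g t)⁻¹ * gbar t)) t :=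
  left_error_autonomous_general n G hmul hinv Xt ξ ζ hcoc g gbar hgG hgbarG hunit hdg hdgbar
end

section
/- Suppose g and ḡ are two differentiable curves on a matrix Lie group G both satisfying ẋ = ξ(t)x + X̃_t(x) + xζ(t), where X̃_t satisfies the cocycle property X̃_t(hg) = h X̃_t(g) + X̃_t(h) g. Then the right-invariant error h = ḡg⁻¹ satisfies the autonomous equation ḣ = X̃_t(h) + ξ(t)h − hξ(t), which does not involve ζ, g, or ḡ. -/
open Matrix

attribute [local instance] Matrix.linftyOpNormedRing Matrix.linftyOpNormedAlgebra

/-!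
Differentiating `h = ḡ g⁻¹` gives `ḣ = (ḡ' - h g') g⁻¹`. Since `ḡ = h g`, the cocycle property
reads `X̃(ḡ) = h X̃(g) + X̃(h) g`, and the right-multiplied terms `ḡ ζ = h (g ζ)` cancel, so
`ḡ' - h g' = (X̃(h) + ξ h - h ξ) g`.
-/

section RingInverse

variable {𝕜 R : Type*} [NontriviallyNormedField 𝕜] [NormedRing R] [HasSummableGeomSeries R]
  [NormedAlgebra 𝕜 R] {a b : 𝕜 → R} {a' b' : R} {x : 𝕜}

theorem HasDerivAt.ringInverse_s5 (hb : HasDerivAt b b' x) (hx : IsUnit (b x)) :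
    HasDerivAt (fun y => Ring.inverse (b y))
      (-(Ring.inverse (b x) * b' * Ring.inverse (b x))) x := by
  obtain ⟨u, hu⟩ := hx
  have hinv := hasFDerivAt_ringInverse (𝕜 := 𝕜) u
  rw [hu] at hinv
  refine (hinv.comp_hasDerivAt x hb).congr_deriv ?_
  simp [← hu]

theorem HasDerivAt.mul_ringInverse (ha : HasDerivAt a a' x) (hb : HasDerivAt b b' x)
    (hx : IsUnit (b x)) :
    HasDerivAt (fun y => a y * Ring.inverse (b y))
      ((a' - a x * Ring.inverse (b x) * b') * Ring.inverse (b x)) x :=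
  (ha.mul (hb.ringInverse_s5 hx)).congr_deriv (by noncomm_ring)

end RingInverse

theorem right_error_deriv_identity {R : Type*} [Ring R] (X : R → R) (ξ ζ g gbar h : R)
    (hgbar : gbar = h * g) (hcoc : X (h * g) = h * X g + X h * g) :
    (ξ * gbar + X gbar + gbar * ζ) - h * (ξ * g + X g + g * ζ) = (X h + ξ * h - h * ξ) * g := by
  subst hgbar
  rw [hcoc]
  noncomm_ring

theorem right_error_autonomous_general (n : ℕ) (G : Set (Matrix (Fin n) (Fin n) ℝ))
    (hmul : ∀ a ∈ G, ∀ b ∈ G, a * b ∈ G)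
    (hinv : ∀ a ∈ G, a⁻¹ ∈ G)
    (Xt : ℝ → Matrix (Fin n) (Fin n) ℝ → Matrix (Fin n) (Fin n) ℝ)
    (ξ ζ : ℝ → Matrix (Fin n) (Fin n) ℝ)
    (hcoc : ∀ t, ∀ g ∈ G, ∀ h ∈ G, Xt t (h * g) = h * Xt t g + Xt t h * g)
    (g gbar : ℝ → Matrix (Fin n) (Fin n) ℝ)
    (hgG : ∀ t, g t ∈ G) (hgbarG : ∀ t, gbar t ∈ G)
    (hunit : ∀ t, IsUnit (g t))
    (hdg : ∀ t, HasDerivAt g (ξ t * g t + Xt t (g t) + g t * ζ t) t)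
    (hdgbar : ∀ t, HasDerivAt gbar (ξ t * gbar t + Xt t (gbar t) + gbar t * ζ t) t) :
    ∀ t, HasDerivAt (fun s => gbar s * (g s)⁻¹)
      (Xt t (gbar t * (g t)⁻¹) + ξ t * (gbar t * (g t)⁻¹)
        - (gbar t * (g t)⁻¹) * ξ t) t := by
  intro t
  simp_rw [nonsing_inv_eq_ringInverse] at hinv ⊢
  set h := gbar t * Ring.inverse (g t)
  have hG : h ∈ G := hmul _ (hgbarG t) _ (hinv _ (hgG t))
  have hgbar : gbar t = h * g t := (Ring.inverse_mul_cancel_right _ _ (hunit t)).symm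
  refine ((hdgbar t).mul_ringInverse (hdg t) (hunit t)).congr_deriv ?_
  rw [right_error_deriv_identity _ _ _ _ _ _ hgbar (hcoc t _ (hgG t) _ hG),
    Ring.mul_inverse_cancel_right _ _ (hunit t)]

/-- If `g` and `ḡ` both satisfy `ẋ = ξ(t) x + X̃_t(x) + x ζ(t)` with `X̃` satisfying the
cocycle property, then the right-invariant error `h = ḡ g⁻¹` satisfies the autonomous
equation `ḣ = X̃_t(h) + ξ(t) h − h ξ(t)`. -/
theorem right_error_autonomous (n : ℕ) (G : Set (Matrix (Fin n) (Fin n) ℝ))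
    (hone : (1 : Matrix (Fin n) (Fin n) ℝ) ∈ G)
    (hmul : ∀ a ∈ G, ∀ b ∈ G, a * b ∈ G)
    (hinv : ∀ a ∈ G, a⁻¹ ∈ G)
    (Xt : ℝ → Matrix (Fin n) (Fin n) ℝ → Matrix (Fin n) (Fin n) ℝ)
    (ξ ζ : ℝ → Matrix (Fin n) (Fin n) ℝ)
    (hcoc : ∀ t, ∀ g ∈ G, ∀ h ∈ G, Xt t (h * g) = h * Xt t g + Xt t h * g)
    (g gbar : ℝ → Matrix (Fin n) (Fin n) ℝ)
    (hgG : ∀ t, g t ∈ G) (hgbarG : ∀ t, gbar t ∈ G)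
    (hunit : ∀ t, IsUnit (g t))
    (hdg : ∀ t, HasDerivAt g (ξ t * g t + Xt t (g t) + g t * ζ t) t)
    (hdgbar : ∀ t, HasDerivAt gbar (ξ t * gbar t + Xt t (gbar t) + gbar t * ζ t) t) :
    ∀ t, HasDerivAt (fun s => gbar s * (g s)⁻¹)
      (Xt t (gbar t * (g t)⁻¹) + ξ t * (gbar t * (g t)⁻¹)
        - (gbar t * (g t)⁻¹) * ξ t) t :=
  right_error_autonomous_general n G hmul hinv Xt ξ ζ hcoc g gbar hgG hgbarG hunit hdg hdgbar
end

section
/- Suppose two curves g₁, g₂ on a matrix Lie group G satisfy ġᵢ = ξᵢ(t)gᵢ + X̃(gᵢ) + gᵢζᵢ(t), where X̃ satisfies the cocycle property X̃(hg) = h X̃(g) + X̃(h)g and ξ₁(t) = ξ₂(t) for all t. Then the left-invariant relative state g₁₂ = g₁⁻¹g₂ satisfies the self-contained equation d/dt g₁₂ = −ζ₁(t) g₁₂ + X̃(g₁₂) + g₁₂ ζ₂(t), which does not involve g₁ or g₂ individually. -/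
open Matrix

attribute [local instance] Matrix.linftyOpNormedRing Matrix.linftyOpNormedAlgebra

/-!
Differentiating `g₁⁻¹ g₂` gives `g₁⁻¹ (ġ₂ - ġ₁ g₁⁻¹ g₂)`. Writing `g₂ = g₁ g₁₂` and expanding
`X̃(g₁ g₁₂)` by the cocycle property, the common left factor `ξ` cancels and the bracket becomes
`g₁ (-ζ₁ g₁₂ + X̃(g₁₂) + g₁₂ ζ₂)`: a field of the same shape, with `-ζ₁` in place of `ξ`.
-/

theorem HasDerivAt.ringInverse_s9 {𝕜 R : Type*} [NontriviallyNormedField 𝕜] [NormedRing R]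
    [HasSummableGeomSeries R] [NormedAlgebra 𝕜 R] {f : 𝕜 → R} {f' : R} {t : 𝕜}
    (hf : HasDerivAt f f' t) (ht : IsUnit (f t)) :
    HasDerivAt (fun s => Ring.inverse (f s))
      (-(Ring.inverse (f t) * f' * Ring.inverse (f t))) t := by
  obtain ⟨u, hu⟩ := ht
  have h := hasFDerivAt_ringInverse (𝕜 := 𝕜) u
  rw [← Ring.inverse_unit, hu] at h
  have := h.comp_hasDerivAt t hf
  simp only [_root_.neg_apply, ContinuousLinearMap.mulLeftRight_apply] at this
  exact this

section Matrix

variable {𝕜 m : Type*} [RCLike 𝕜] [Fintype m] [DecidableEq m]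
  {f g : 𝕜 → Matrix m m 𝕜} {f' g' : Matrix m m 𝕜} {t : 𝕜}

theorem HasDerivAt.matrix_inv (hf : HasDerivAt f f' t) (ht : IsUnit (f t)) :
    HasDerivAt (fun s => (f s)⁻¹) (-((f t)⁻¹ * f' * (f t)⁻¹)) t := by
  simp only [nonsing_inv_eq_ringInverse]
  exact hf.ringInverse_s9 ht

theorem HasDerivAt.matrix_inv_mul (hf : HasDerivAt f f' t) (hg : HasDerivAt g g' t)
    (ht : IsUnit (f t)) :
    HasDerivAt (fun s => (f s)⁻¹ * g s) ((f t)⁻¹ * (g' - f' * ((f t)⁻¹ * g t))) t :=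
  ((hf.matrix_inv ht).mul hg).congr_deriv (by noncomm_ring)

end Matrix

def cocycleField {R : Type*} [Ring R] (X : R → R) (ξ ζ g : R) : R :=
  ξ * g + X g + g * ζ

theorem cocycleField_sub_mul {R : Type*} [Ring R] {X : R → R} {ξ ζ₁ ζ₂ g₁ g₂ k : R}
    (hk : g₁ * k = g₂) (hX : X (g₁ * k) = g₁ * X k + X g₁ * k) :
    cocycleField X ξ ζ₂ g₂ - cocycleField X ξ ζ₁ g₁ * k = g₁ * cocycleField X (-ζ₁) ζ₂ k := by
  subst hk
  simp only [cocycleField, hX]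
  noncomm_ring

theorem left_relative_state_autonomous_general (n : ℕ) (G : Set (Matrix (Fin n) (Fin n) ℝ))
    (hmul : ∀ a ∈ G, ∀ b ∈ G, a * b ∈ G)
    (hinv : ∀ a ∈ G, a⁻¹ ∈ G)
    (Xt : Matrix (Fin n) (Fin n) ℝ → Matrix (Fin n) (Fin n) ℝ)
    (ξ₁ ξ₂ ζ₁ ζ₂ : ℝ → Matrix (Fin n) (Fin n) ℝ)
    (hcoc : ∀ g ∈ G, ∀ h ∈ G, Xt (h * g) = h * Xt g + Xt h * g)
    (hξ : ∀ t, ξ₁ t = ξ₂ t)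
    (g₁ g₂ : ℝ → Matrix (Fin n) (Fin n) ℝ)
    (hg₁G : ∀ t, g₁ t ∈ G) (hg₂G : ∀ t, g₂ t ∈ G)
    (hunit : ∀ t, IsUnit (g₁ t))
    (hdg₁ : ∀ t, HasDerivAt g₁ (ξ₁ t * g₁ t + Xt (g₁ t) + g₁ t * ζ₁ t) t)
    (hdg₂ : ∀ t, HasDerivAt g₂ (ξ₂ t * g₂ t + Xt (g₂ t) + g₂ t * ζ₂ t) t) :
    ∀ t, HasDerivAt (fun s => (g₁ s)⁻¹ * g₂ s)
      (-(ζ₁ t) * ((g₁ t)⁻¹ * g₂ t) + Xt ((g₁ t)⁻¹ * g₂ t)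
        + ((g₁ t)⁻¹ * g₂ t) * ζ₂ t) t := by
  intro t
  have hdet : IsUnit (g₁ t).det := (isUnit_iff_isUnit_det _).mp (hunit t)
  have hrel : g₁ t * ((g₁ t)⁻¹ * g₂ t) = g₂ t := mul_nonsing_inv_cancel_left _ _ hdet
  have hX := hcoc _ (hmul _ (hinv _ (hg₁G t)) _ (hg₂G t)) _ (hg₁G t)
  have hfield := cocycleField_sub_mul (ξ := ξ₂ t) (ζ₁ := ζ₁ t) (ζ₂ := ζ₂ t) hrel hX
  refine ((hdg₁ t).matrix_inv_mul (hdg₂ t) (hunit t)).congr_deriv ?_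
  rw [hξ t]
  exact (congrArg _ hfield).trans (nonsing_inv_mul_cancel_left _ _ hdet)

/-- If `ġᵢ = ξᵢ(t) gᵢ + X̃(gᵢ) + gᵢ ζᵢ(t)` with `X̃` satisfying the cocycle property and
`ξ₁ = ξ₂`, then the left-invariant relative state `g₁₂ = g₁⁻¹ g₂` satisfies the
self-contained equation `d/dt g₁₂ = −ζ₁(t) g₁₂ + X̃(g₁₂) + g₁₂ ζ₂(t)`. -/
theorem left_relative_state_autonomous (n : ℕ) (G : Set (Matrix (Fin n) (Fin n) ℝ))
    (hone : (1 : Matrix (Fin n) (Fin n) ℝ) ∈ G)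
    (hmul : ∀ a ∈ G, ∀ b ∈ G, a * b ∈ G)
    (hinv : ∀ a ∈ G, a⁻¹ ∈ G)
    (Xt : Matrix (Fin n) (Fin n) ℝ → Matrix (Fin n) (Fin n) ℝ)
    (ξ₁ ξ₂ ζ₁ ζ₂ : ℝ → Matrix (Fin n) (Fin n) ℝ)
    (hcoc : ∀ g ∈ G, ∀ h ∈ G, Xt (h * g) = h * Xt g + Xt h * g)
    (hξ : ∀ t, ξ₁ t = ξ₂ t)
    (g₁ g₂ : ℝ → Matrix (Fin n) (Fin n) ℝ)
    (hg₁G : ∀ t, g₁ t ∈ G) (hg₂G : ∀ t, g₂ t ∈ G)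
    (hunit : ∀ t, IsUnit (g₁ t))
    (hdg₁ : ∀ t, HasDerivAt g₁ (ξ₁ t * g₁ t + Xt (g₁ t) + g₁ t * ζ₁ t) t)
    (hdg₂ : ∀ t, HasDerivAt g₂ (ξ₂ t * g₂ t + Xt (g₂ t) + g₂ t * ζ₂ t) t) :
    ∀ t, HasDerivAt (fun s => (g₁ s)⁻¹ * g₂ s)
      (-(ζ₁ t) * ((g₁ t)⁻¹ * g₂ t) + Xt ((g₁ t)⁻¹ * g₂ t)
        + ((g₁ t)⁻¹ * g₂ t) * ζ₂ t) t :=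
  left_relative_state_autonomous_general n G hmul hinv Xt ξ₁ ξ₂ ζ₁ ζ₂ hcoc hξ g₁ g₂ hg₁G hg₂G hunit
    hdg₁ hdg₂
end

section
/- Consider curves g₁ = (R₁,v₁,x₁) and g₂ = (R₂,v₂,x₂) in SE₂(3) satisfying ẋᵢ = vᵢ, v̇ᵢ = Rᵢaᵢ + 𝗀e₃, Ṙᵢ = RᵢΩ̂ᵢ. Then the left-invariant relative state (R, v, x) = (R₁ᵀR₂, R₁ᵀ(v₂−v₁), R₁ᵀ(x₂−x₁)) satisfies the self-contained equations Ṙ = RΩ̂₂ − Ω̂₁R, v̇ = Ra₂ − Ω̂₁v − a₁, ẋ = v − Ω̂₁x, in which the gravity term 𝗀e₃ and the absolute states have cancelled. -/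
/-!
Both frames are differentiated with the Leibniz rule. Since `Ω̂` is skew-symmetric,
`Ṙ₁ = R₁Ω̂₁` gives `d/dt R₁ᵀ = -Ω̂₁R₁ᵀ`, which produces the `-Ω̂₁(·)` terms. Gravity is the same
for both vehicles, so it drops out of `v̇₂ - v̇₁ = R₂a₂ - R₁a₁`, and `R₁ᵀR₁ = 1` turns
`R₁ᵀR₁a₁` into `a₁`.
-/

open Matrix

attribute [local instance] Matrix.linftyOpNormedRing Matrix.linftyOpNormedAlgebra

/-- The skew-symmetric hat map on `ℝ³`, satisfying `x̂ y = x × y`. -/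
noncomputable def hat (ω : Fin 3 → ℝ) : Matrix (Fin 3) (Fin 3) ℝ :=
  !![0, -ω 2, ω 1; ω 2, 0, -ω 0; -ω 1, ω 0, 0]

section

variable {𝕜 : Type*} [NontriviallyNormedField 𝕜] [CompleteSpace 𝕜]
  {n : Type*} [Fintype n] [DecidableEq n] {t : 𝕜}

theorem HasDerivAt.matrix_transpose {M : 𝕜 → Matrix n n 𝕜} {M' : Matrix n n 𝕜}
    (h : HasDerivAt M M' t) : HasDerivAt (fun s => (M s)ᵀ) M'ᵀ t :=
  (transposeLinearEquiv n n 𝕜 𝕜).toLinearMap.toContinuousLinearMap.hasFDerivAt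
    |>.comp_hasDerivAt t h

theorem HasDerivAt.matrix_mulVec {M : 𝕜 → Matrix n n 𝕜} {M' : Matrix n n 𝕜}
    {w : 𝕜 → n → 𝕜} {w' : n → 𝕜} (hM : HasDerivAt M M' t) (hw : HasDerivAt w w' t) :
    HasDerivAt (fun s => M s *ᵥ w s) (M' *ᵥ w t + M t *ᵥ w') t := by
  let mulVecCLM : Matrix n n 𝕜 →L[𝕜] (n → 𝕜) →L[𝕜] n → 𝕜 :=
    (LinearMap.toContinuousLinearMap.toLinearMap ∘ₗ toLin'.toLinearMap).toContinuousLinearMap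
  exact (mulVecCLM.hasFDerivAt.comp_hasDerivAt t hM).clm_apply hw

variable {R₁ R₂ : 𝕜 → Matrix n n 𝕜} {A₁ A₂ : Matrix n n 𝕜}

theorem HasDerivAt.transpose_of_mul_skew (hA₁ : A₁ᵀ = -A₁) (hR₁ : HasDerivAt R₁ (R₁ t * A₁) t) :
    HasDerivAt (fun s => (R₁ s)ᵀ) (-(A₁ * (R₁ t)ᵀ)) t := by
  simpa only [transpose_mul, hA₁, neg_mul] using hR₁.matrix_transpose

theorem HasDerivAt.transpose_mul_of_mul_skew (hA₁ : A₁ᵀ = -A₁)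
    (hR₁ : HasDerivAt R₁ (R₁ t * A₁) t) (hR₂ : HasDerivAt R₂ (R₂ t * A₂) t) :
    HasDerivAt (fun s => (R₁ s)ᵀ * R₂ s) ((R₁ t)ᵀ * R₂ t * A₂ - A₁ * ((R₁ t)ᵀ * R₂ t)) t :=
  ((hR₁.transpose_of_mul_skew hA₁).mul hR₂).congr_deriv (by noncomm_ring)

theorem HasDerivAt.transpose_mulVec_of_mul_skew {w : 𝕜 → n → 𝕜} {w' : n → 𝕜}
    (hA₁ : A₁ᵀ = -A₁) (hR₁ : HasDerivAt R₁ (R₁ t * A₁) t) (hw : HasDerivAt w w' t) :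
    HasDerivAt (fun s => (R₁ s)ᵀ *ᵥ w s) ((R₁ t)ᵀ *ᵥ w' - A₁ *ᵥ ((R₁ t)ᵀ *ᵥ w t)) t :=
  ((hR₁.transpose_of_mul_skew hA₁).matrix_mulVec hw).congr_deriv <| by
    rw [neg_mulVec, ← mulVec_mulVec, neg_add_eq_sub]

end

theorem hat_transpose (ω : Fin 3 → ℝ) : (hat ω)ᵀ = -hat ω := by
  ext i j
  fin_cases i <;> fin_cases j <;> simp [hat]

theorem relative_vehicle_kinematics_general
    (R₁ R₂ : ℝ → Matrix (Fin 3) (Fin 3) ℝ)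
    (v₁ v₂ x₁ x₂ Ω₁ Ω₂ a₁ a₂ : ℝ → Fin 3 → ℝ) (grav : ℝ)
    (hR₁orth : ∀ t, (R₁ t)ᵀ * R₁ t = 1)
    (hdx₁ : ∀ t, HasDerivAt x₁ (v₁ t) t)
    (hdx₂ : ∀ t, HasDerivAt x₂ (v₂ t) t)
    (hdv₁ : ∀ t, HasDerivAt v₁ (R₁ t *ᵥ a₁ t + grav • ![0, 0, 1]) t)
    (hdv₂ : ∀ t, HasDerivAt v₂ (R₂ t *ᵥ a₂ t + grav • ![0, 0, 1]) t)
    (hdR₁ : ∀ t, HasDerivAt R₁ (R₁ t * hat (Ω₁ t)) t)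
    (hdR₂ : ∀ t, HasDerivAt R₂ (R₂ t * hat (Ω₂ t)) t) :
    ∀ t,
      HasDerivAt (fun s => (R₁ s)ᵀ * R₂ s)
        ((R₁ t)ᵀ * R₂ t * hat (Ω₂ t) - hat (Ω₁ t) * ((R₁ t)ᵀ * R₂ t)) t ∧
      HasDerivAt (fun s => (R₁ s)ᵀ *ᵥ (v₂ s - v₁ s))
        (((R₁ t)ᵀ * R₂ t) *ᵥ a₂ t - hat (Ω₁ t) *ᵥ ((R₁ t)ᵀ *ᵥ (v₂ t - v₁ t)) - a₁ t) t ∧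
      HasDerivAt (fun s => (R₁ s)ᵀ *ᵥ (x₂ s - x₁ s))
        ((R₁ t)ᵀ *ᵥ (v₂ t - v₁ t) - hat (Ω₁ t) *ᵥ ((R₁ t)ᵀ *ᵥ (x₂ t - x₁ t))) t := by
  intro t
  have hskew := hat_transpose (Ω₁ t)
  refine ⟨(hdR₁ t).transpose_mul_of_mul_skew hskew (hdR₂ t), ?_,
    (hdR₁ t).transpose_mulVec_of_mul_skew hskew ((hdx₂ t).sub (hdx₁ t))⟩
  have hdv : HasDerivAt (fun s => v₂ s - v₁ s) (R₂ t *ᵥ a₂ t - R₁ t *ᵥ a₁ t) t :=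
    ((hdv₂ t).sub (hdv₁ t)).congr_deriv (add_sub_add_right_eq_sub _ _ _)
  refine ((hdR₁ t).transpose_mulVec_of_mul_skew hskew hdv).congr_deriv ?_
  rw [mulVec_sub _ (R₂ t *ᵥ a₂ t), mulVec_mulVec (a₂ t), mulVec_mulVec (a₁ t), hR₁orth,
    one_mulVec, sub_right_comm]

/-- For two vehicles with kinematics `ẋᵢ = vᵢ`, `v̇ᵢ = Rᵢ aᵢ + 𝗀 e₃`, `Ṙᵢ = Rᵢ Ω̂ᵢ`,
the left-invariant relative state `(R, v, x) = (R₁ᵀR₂, R₁ᵀ(v₂−v₁), R₁ᵀ(x₂−x₁))`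
satisfies the self-contained equations `Ṙ = RΩ̂₂ − Ω̂₁R`, `v̇ = Ra₂ − Ω̂₁v − a₁`,
`ẋ = v − Ω̂₁x`, in which gravity and the absolute states have cancelled. -/
theorem relative_vehicle_kinematics
    (R₁ R₂ : ℝ → Matrix (Fin 3) (Fin 3) ℝ)
    (v₁ v₂ x₁ x₂ Ω₁ Ω₂ a₁ a₂ : ℝ → Fin 3 → ℝ) (grav : ℝ)
    (hR₁orth : ∀ t, (R₁ t)ᵀ * R₁ t = 1)
    (hR₂orth : ∀ t, (R₂ t)ᵀ * R₂ t = 1)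
    (hdx₁ : ∀ t, HasDerivAt x₁ (v₁ t) t)
    (hdx₂ : ∀ t, HasDerivAt x₂ (v₂ t) t)
    (hdv₁ : ∀ t, HasDerivAt v₁ (R₁ t *ᵥ a₁ t + grav • ![0, 0, 1]) t)
    (hdv₂ : ∀ t, HasDerivAt v₂ (R₂ t *ᵥ a₂ t + grav • ![0, 0, 1]) t)
    (hdR₁ : ∀ t, HasDerivAt R₁ (R₁ t * hat (Ω₁ t)) t)
    (hdR₂ : ∀ t, HasDerivAt R₂ (R₂ t * hat (Ω₂ t)) t) :
    ∀ t,
      HasDerivAt (fun s => (R₁ s)ᵀ * R₂ s)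
        ((R₁ t)ᵀ * R₂ t * hat (Ω₂ t) - hat (Ω₁ t) * ((R₁ t)ᵀ * R₂ t)) t ∧
      HasDerivAt (fun s => (R₁ s)ᵀ *ᵥ (v₂ s - v₁ s))
        (((R₁ t)ᵀ * R₂ t) *ᵥ a₂ t - hat (Ω₁ t) *ᵥ ((R₁ t)ᵀ *ᵥ (v₂ t - v₁ t)) - a₁ t) t ∧
      HasDerivAt (fun s => (R₁ s)ᵀ *ᵥ (x₂ s - x₁ s))
        ((R₁ t)ᵀ *ᵥ (v₂ t - v₁ t) - hat (Ω₁ t) *ᵥ ((R₁ t)ᵀ *ᵥ (x₂ t - x₁ t))) t :=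
  relative_vehicle_kinematics_general R₁ R₂ v₁ v₂ x₁ x₂ Ω₁ Ω₂ a₁ a₂ grav hR₁orth hdx₁ hdx₂ hdv₁ hdv₂
    hdR₁ hdR₂
end

section
/- Let X̃ be a vector field on a matrix Lie group G satisfying the cocycle property X̃(hg) = h X̃(g) + X̃(h) g, and suppose X̃ is differentiable at e. Then for the error f = e + ϑ + O(‖ϑ‖²) with ϑ ∈ 𝔤, the first-order expansion of the error equation ḟ = X̃(f) + fζ − ζf about f = e is ϑ̇ = DX̃(e)·ϑ + [ϑ, ζ], i.e., the linearized error dynamics ϑ̇ = DX̃(e)·ϑ + ad_ϑ ζ depend only on ζ and the derivative of X̃ at the identity, not on the state trajectory. -/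
open Matrix

attribute [local instance] Matrix.linftyOpNormedRing Matrix.linftyOpNormedAlgebra

/-!
Taking `g = h = e` in the cocycle identity gives `X̃(e) = 2 X̃(e)`, so the error field vanishes at
the identity. Its derivative there is the derivative of `X̃` at `e` plus that of the linear map
`f ↦ fζ − ζf`, which is itself.
-/

theorem cocycle_apply_one_eq_zero {R : Type*} [NonAssocRing R] {G : Set R} (hone : 1 ∈ G)
    {X : R → R} (hcoc : ∀ g ∈ G, ∀ h ∈ G, X (h * g) = h * X g + X h * g) : X 1 = 0 := by
  have h := hcoc 1 hone 1 hone
  rw [one_mul, one_mul, mul_one] at h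
  exact left_eq_add.mp h

section ErrorField

variable {𝕜 A : Type*} [NontriviallyNormedField 𝕜] [NormedRing A] [NormedAlgebra 𝕜 A]

theorem hasFDerivAt_mul_const_sub_const_mul (ζ x : A) :
    HasFDerivAt (fun y => y * ζ - ζ * y)
      ((ContinuousLinearMap.mul 𝕜 A).flip ζ - ContinuousLinearMap.mul 𝕜 A ζ) x :=
  ((ContinuousLinearMap.mul 𝕜 A).flip ζ - ContinuousLinearMap.mul 𝕜 A ζ).hasFDerivAt

theorem hasFDerivAt_one_add_add_commutator {X : A → A} {D : A →L[𝕜] A}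
    (hD : HasFDerivAt X D 1) (ζ : A) :
    HasFDerivAt (fun ϑ => X (1 + ϑ) + (1 + ϑ) * ζ - ζ * (1 + ϑ))
      (D + ((ContinuousLinearMap.mul 𝕜 A).flip ζ - ContinuousLinearMap.mul 𝕜 A ζ)) 0 := by
  have hX : HasFDerivAt (fun ϑ => X (1 + ϑ)) D 0 :=
    (hasFDerivAt_comp_add_left 1).2 (by rwa [add_zero])
  have hC := (hasFDerivAt_comp_add_left (1 : A)).2
    (hasFDerivAt_mul_const_sub_const_mul (𝕜 := 𝕜) ζ (1 + 0))
  exact (hX.add hC).congr_of_eventuallyEq (.of_forall fun ϑ => add_sub_assoc _ _ _)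

end ErrorField

theorem linearized_error_dynamics_general (n : ℕ) (G : Set (Matrix (Fin n) (Fin n) ℝ))
    (hone : (1 : Matrix (Fin n) (Fin n) ℝ) ∈ G)
    (Xt : Matrix (Fin n) (Fin n) ℝ → Matrix (Fin n) (Fin n) ℝ)
    (ζ : Matrix (Fin n) (Fin n) ℝ)
    (hcoc : ∀ g ∈ G, ∀ h ∈ G, Xt (h * g) = h * Xt g + Xt h * g)
    (D : Matrix (Fin n) (Fin n) ℝ →L[ℝ] Matrix (Fin n) (Fin n) ℝ)
    (hD : HasFDerivAt Xt D 1) :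
    (Xt (1 + 0) + (1 + 0) * ζ - ζ * (1 + 0) = 0) ∧
      HasFDerivAt (fun ϑ => Xt (1 + ϑ) + (1 + ϑ) * ζ - ζ * (1 + ϑ))
        (@HAdd.hAdd _ _ _ instHAdd D ((ContinuousLinearMap.mul ℝ (Matrix (Fin n) (Fin n) ℝ)).flip ζ
          - ContinuousLinearMap.mul ℝ (Matrix (Fin n) (Fin n) ℝ) ζ)) 0 := by
  refine ⟨?_, hasFDerivAt_one_add_add_commutator hD ζ⟩
  rw [add_zero, one_mul, mul_one, add_sub_cancel_right]
  exact cocycle_apply_one_eq_zero hone hcoc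

/-- Linearization of the invariant error dynamics: if `X̃` satisfies the cocycle
property and is differentiable at `e` with derivative `D`, then the map
`ϑ ↦ X̃(e+ϑ) + (e+ϑ)ζ − ζ(e+ϑ)` vanishes at `ϑ = 0` and its first-order expansion at
`ϑ = 0` is `ϑ ↦ DX̃(e)·ϑ + ϑζ − ζϑ = DX̃(e)·ϑ + ad_ϑ ζ`, depending only on `ζ` and the
derivative of `X̃` at the identity, not on the state trajectory. -/
theorem linearized_error_dynamics (n : ℕ) (G : Set (Matrix (Fin n) (Fin n) ℝ))
    (hone : (1 : Matrix (Fin n) (Fin n) ℝ) ∈ G)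
    (hmul : ∀ a ∈ G, ∀ b ∈ G, a * b ∈ G)
    (Xt : Matrix (Fin n) (Fin n) ℝ → Matrix (Fin n) (Fin n) ℝ)
    (ζ : Matrix (Fin n) (Fin n) ℝ)
    (hcoc : ∀ g ∈ G, ∀ h ∈ G, Xt (h * g) = h * Xt g + Xt h * g)
    (D : Matrix (Fin n) (Fin n) ℝ →L[ℝ] Matrix (Fin n) (Fin n) ℝ)
    (hD : HasFDerivAt Xt D 1) :
    (Xt (1 + 0) + (1 + 0) * ζ - ζ * (1 + 0) = 0) ∧
      HasFDerivAt (fun ϑ => Xt (1 + ϑ) + (1 + ϑ) * ζ - ζ * (1 + ϑ))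
        (@HAdd.hAdd _ _ _ instHAdd D ((ContinuousLinearMap.mul ℝ (Matrix (Fin n) (Fin n) ℝ)).flip ζ
          - ContinuousLinearMap.mul ℝ (Matrix (Fin n) (Fin n) ℝ) ζ)) 0 :=
  linearized_error_dynamics_general n G hone Xt ζ hcoc D hD
end
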